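/- Let T > 0, ν > 0, p_M > 0, R > 0, and let G¹, G² : ℝ → ℝ be continuous. Let r, p, W : [0,T] × ℝ → ℝ satisfy: r is continuously differentiable with 0 ≤ r ≤ 1; W is twice continuously differentiable in x with ∂_x W continuous on [0,T] × ℝ; 0 ≤ p ≤ p_M and W ≥ 0 everywhere; −ν ∂_x² W + W = p on [0,T] × ℝ; r(t,x)(1 − r(t,x)) = 0 whenever |x| ≥ R; and ∂_t r − (∂_x r)(∂_x W) = r (1 − r) ( G¹(p) − G²(p) ) on [0,T] × ℝ. If the two species are initially segregated, i.e. ∫_ℝ r(0,x)(1 − r(0,x)) dx = 0, then ∫_ℝ r(t,x)(1 − r(t,x)) dx = 0 for all t ∈ [0,T]. -/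

import Mathlib

/-!
Write `u = r (1 - r)` and `F(t) = ∫ u(t, x) dx`. Along the transport equation
`∂ₜu = (1 - 2r) ∂ₜr = ∂ₓ(u ∂ₓW) - u ∂ₓ²W + (1 - 2r) u (G¹(p) - G²(p))`.
The flux term integrates to zero since `u(t, ·)` has compact support, Brinkman's law with `W ≥ 0`
and `p ≤ p_M` gives `-∂ₓ²W = (p - W)/ν ≤ p_M/ν`, and `|1 - 2r| ≤ 1`. Hence `F' ≤ (p_M/ν + C) F`
with `C` a bound of `|G¹ - G²|` on `[0, p_M]`, and Gronwall's inequality propagates `F(0) = 0`.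
-/

open MeasureTheory Set Filter Topology Function

theorem le_abs_of_notMem_Icc_neg {x R : ℝ} (hx : x ∉ Icc (-R) R) : R ≤ |x| := by
  rw [mem_Icc, ← abs_le] at hx
  exact (not_le.mp hx).le

theorem hasCompactSupport_of_eq_zero_of_le_abs {E : Type*} [Zero E] {f : ℝ → E} {R : ℝ}
    (hf : ∀ x, R ≤ |x| → f x = 0) : HasCompactSupport f :=
  HasCompactSupport.intro isCompact_Icc fun x hx => hf x (le_abs_of_notMem_Icc_neg hx)

theorem HasCompactSupport.integral_deriv_eq_zero {E : Type*} [NormedAddCommGroup E]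
    [NormedSpace ℝ E] {f : ℝ → E} (hf : ContDiff ℝ 1 f) (hfc : HasCompactSupport f) :
    ∫ x, deriv f x = 0 :=
  integral_eq_zero_of_hasDerivAt_of_integrable
    (fun x => (hf.differentiable one_ne_zero x).hasDerivAt)
    ((hf.continuous_deriv le_rfl).integrable_of_hasCompactSupport hfc.deriv)
    (hf.continuous.integrable_of_hasCompactSupport hfc)

theorem HasDerivAt.mul_one_sub {f : ℝ → ℝ} {f' x : ℝ} (hf : HasDerivAt f f' x) :
    HasDerivAt (fun y => f y * (1 - f y)) ((1 - 2 * f x) * f') x := by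
  have h : HasDerivAt (fun y => f y * (1 - f y)) _ x := hf.mul (hf.const_sub 1)
  convert h using 1
  ring

theorem ContDiffOn.contDiff_of_uncurry {𝕜 E F G : Type*} [NontriviallyNormedField 𝕜]
    [NormedAddCommGroup E] [NormedSpace 𝕜 E] [NormedAddCommGroup F] [NormedSpace 𝕜 F]
    [NormedAddCommGroup G] [NormedSpace 𝕜 G] {f : E → F → G} {s : Set E} {n : WithTop ℕ∞}
    (hf : ContDiffOn 𝕜 n (uncurry f) (s ×ˢ univ)) {t : E} (ht : t ∈ s) :
    ContDiff 𝕜 n (f t) :=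
  contDiffOn_univ.mp <| hf.comp (contDiffOn_const.prodMk contDiffOn_id) fun _ _ => ⟨ht, trivial⟩

theorem le_exp_mul_sub_mul_of_hasDerivAt_le {f f' : ℝ → ℝ} {a b K : ℝ}
    (hf : ContinuousOn f (Icc a b)) (hf' : ∀ t ∈ Ioo a b, HasDerivAt f (f' t) t)
    (hbound : ∀ t ∈ Ioo a b, f' t ≤ K * f t) :
    ∀ t ∈ Icc a b, f t ≤ Real.exp (K * (t - a)) * f a := by
  set g : ℝ → ℝ := fun t => Real.exp (-K * t) * f t
  have hg' : ∀ t ∈ Ioo a b, HasDerivAt g (Real.exp (-K * t) * (f' t - K * f t)) t := by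
    intro t ht
    have h : HasDerivAt g _ t := ((hasDerivAt_id' t).const_mul (-K)).exp.mul (hf' t ht)
    convert h using 1
    ring
  have hanti : AntitoneOn g (Icc a b) := by
    refine antitoneOn_of_deriv_nonpos (convex_Icc a b)
      ((Real.continuous_exp.comp (continuous_const.mul continuous_id)).continuousOn.mul hf)
      ?_ ?_ <;> rw [interior_Icc]
    · exact fun t ht => (hg' t ht).differentiableAt.differentiableWithinAt
    · intro t ht
      rw [(hg' t ht).deriv]
      exact mul_nonpos_of_nonneg_of_nonpos (Real.exp_nonneg _) (by linarith [hbound t ht])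
  intro t ht
  have hga : g t ≤ g a := hanti ⟨le_rfl, ht.1.trans ht.2⟩ ht ht.1
  calc f t = Real.exp (K * t) * g t := by
        rw [← mul_assoc, ← Real.exp_add, neg_mul, add_neg_cancel, Real.exp_zero, one_mul]
    _ ≤ Real.exp (K * t) * g a := mul_le_mul_of_nonneg_left hga (Real.exp_nonneg _)
    _ = Real.exp (K * (t - a)) * f a := by
        simp only [g, ← mul_assoc, ← Real.exp_add]
        ring_nf

theorem hasDerivAt_integral_of_contDiffOn {f : ℝ → ℝ → ℝ} {U : Set ℝ} {R t : ℝ}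
    (hU : IsOpen U) (hf : ContDiffOn ℝ 1 (uncurry f) (U ×ˢ (univ : Set ℝ)))
    (hsupp : ∀ s ∈ U, ∀ x, R ≤ |x| → f s x = 0) (ht : t ∈ U) :
    Integrable (fun x => deriv (f · x) t) ∧
      HasDerivAt (fun s => ∫ x, f s x) (∫ x, deriv (f · x) t) t := by
  have hUx : IsOpen (U ×ˢ (univ : Set ℝ)) := hU.prod isOpen_univ
  have hpartial : ∀ s ∈ U, ∀ x,
      HasDerivAt (f · x) (fderiv ℝ (uncurry f) (s, x) (1, 0)) s := by
    intro s hs x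
    have hd : HasFDerivAt (uncurry f) (fderiv ℝ (uncurry f) (s, x)) (s, x) :=
      ((hf.differentiableOn one_ne_zero).differentiableAt
        (hUx.mem_nhds ⟨hs, trivial⟩)).hasFDerivAt
    exact hd.comp_hasDerivAt s ((hasDerivAt_id s).prodMk (hasDerivAt_const s x))
  have hcont : ContinuousOn (fun q => fderiv ℝ (uncurry f) q (1, 0)) (U ×ˢ univ) :=
    (hf.continuousOn_fderiv_of_isOpen hUx le_rfl).clm_apply continuousOn_const
  obtain ⟨ε, hε, hball⟩ := Metric.nhds_basis_closedBall.mem_iff.1 (hU.mem_nhds ht)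
  obtain ⟨C, hC⟩ := ((isCompact_closedBall t ε).prod (isCompact_Icc (a := -R) (b := R))
    ).exists_bound_of_continuousOn (hcont.mono (prod_mono hball (subset_univ _)))
  have hbound : ∀ s ∈ Metric.ball t ε, ∀ x,
      ‖deriv (f · x) s‖ ≤ (Icc (-R) R).indicator (fun _ => C) x := by
    intro s hs x
    have hsU : s ∈ U := hball (Metric.ball_subset_closedBall hs)
    rw [(hpartial s hsU x).deriv]
    by_cases hx : x ∈ Icc (-R) R
    · rw [indicator_of_mem hx]
      exact hC (s, x) ⟨Metric.ball_subset_closedBall hs, hx⟩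
    · have hzero : HasDerivAt (f · x) 0 s :=
        (hasDerivAt_const s 0).congr_of_eventuallyEq <| eventually_of_mem (hU.mem_nhds hsU)
          fun s' hs' => hsupp s' hs' x (le_abs_of_notMem_Icc_neg hx)
      rw [(hpartial s hsU x).unique hzero, indicator_of_notMem hx, norm_zero]
  have hderiv_cont : Continuous fun x => deriv (f · x) t := by
    simp only [fun x => (hpartial t ht x).deriv]
    exact continuousOn_univ.mp <| hcont.comp (by fun_prop) fun x _ => ⟨ht, trivial⟩
  exact hasDerivAt_integral_of_dominated_loc_of_deriv_le (Metric.ball_mem_nhds t hε)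
    (eventually_of_mem (hU.mem_nhds ht) fun s hs =>
      (hf.contDiff_of_uncurry hs).continuous.aestronglyMeasurable)
    ((hf.contDiff_of_uncurry ht).continuous.integrable_of_hasCompactSupport
      (hasCompactSupport_of_eq_zero_of_le_abs (hsupp t ht)))
    hderiv_cont.aestronglyMeasurable
    (ae_of_all _ fun x s hs => hbound s hs x)
    ((integrableOn_const measure_Icc_lt_top.ne).integrable_indicator measurableSet_Icc)
    (ae_of_all _ fun x s hs =>
      (hpartial s (hball (Metric.ball_subset_closedBall hs)) x).differentiableAt.hasDerivAt)

theorem deriv_mul_one_sub_le_of_transport {T ν pM C : ℝ} {G : ℝ → ℝ}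
    {r p W : ℝ → ℝ → ℝ}
    (hν : 0 < ν) (hr : ContDiffOn ℝ 1 (uncurry r) (Icc 0 T ×ˢ (univ : Set ℝ)))
    (hW2 : ∀ t ∈ Icc 0 T, ContDiff ℝ 2 (W t)) {t : ℝ} (ht : t ∈ Ioo 0 T) (x : ℝ)
    (hr01 : r t x ∈ Icc 0 1) (hp : p t x ≤ pM) (hW0 : 0 ≤ W t x)
    (hbrinkman : -ν * deriv (deriv (W t)) x + W t x = p t x) (hG : |G (p t x)| ≤ C)
    (hpde : derivWithin (fun s => r s x) (Icc 0 T) t - deriv (r t) x * deriv (W t) x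
      = r t x * (1 - r t x) * G (p t x)) :
    deriv (fun s => r s x * (1 - r s x)) t ≤
      deriv (fun y => r t y * (1 - r t y) * deriv (W t) y) x
        + (pM / ν + C) * (r t x * (1 - r t x)) := by
  have ht' : t ∈ Icc 0 T := Ioo_subset_Icc_self ht
  have hrt : DifferentiableAt ℝ (r · x) t :=
    ((hr.comp (contDiffOn_id.prodMk contDiffOn_const) fun _ hs => ⟨hs, trivial⟩).differentiableOn
        one_ne_zero t ht').differentiableAt (Icc_mem_nhds ht.1 ht.2)
  have hrx : Differentiable ℝ (r t) := (hr.contDiff_of_uncurry ht').differentiable one_ne_zero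
  have hWx : Differentiable ℝ (deriv (W t)) := (hW2 t ht').deriv'.differentiable one_ne_zero
  have hflux : HasDerivAt (fun y => r t y * (1 - r t y) * deriv (W t) y) _ x :=
    (hrx x).hasDerivAt.mul_one_sub.mul (hWx x).hasDerivAt
  rw [hrt.hasDerivAt.mul_one_sub.deriv, ← derivWithin_of_mem_nhds (Icc_mem_nhds ht.1 ht.2),
    hflux.deriv, eq_add_of_sub_eq hpde]
  have hu : 0 ≤ r t x * (1 - r t x) := mul_nonneg hr01.1 (sub_nonneg.2 hr01.2)
  have hgrowth : (1 - 2 * r t x) * G (p t x) ≤ C := by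
    refine (le_abs_self _).trans ?_
    rw [abs_mul]
    have h2r : |1 - 2 * r t x| ≤ 1 := abs_le.2 ⟨by linarith [hr01.2], by linarith [hr01.1]⟩
    exact (mul_le_of_le_one_left (abs_nonneg _) h2r).trans hG
  have hcurv : -(pM / ν) ≤ deriv (deriv (W t)) x := by
    rw [← neg_div, div_le_iff₀ hν]
    linarith
  nlinarith [mul_le_mul_of_nonneg_left hgrowth hu, mul_le_mul_of_nonneg_left hcurv hu]

theorem integral_deriv_mul_one_sub_le_of_transport {T ν pM R C : ℝ} {G : ℝ → ℝ}
    {r p W : ℝ → ℝ → ℝ} (hν : 0 < ν)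
    (hr : ContDiffOn ℝ 1 (uncurry r) (Icc 0 T ×ˢ (univ : Set ℝ)))
    (hW2 : ∀ t ∈ Icc 0 T, ContDiff ℝ 2 (W t)) {t : ℝ} (ht : t ∈ Ioo 0 T)
    (hr01 : ∀ x, r t x ∈ Icc 0 1) (hp : ∀ x, p t x ≤ pM) (hW0 : ∀ x, 0 ≤ W t x)
    (hbrinkman : ∀ x, -ν * deriv (deriv (W t)) x + W t x = p t x) (hG : ∀ x, |G (p t x)| ≤ C)
    (hpde : ∀ x, derivWithin (fun s => r s x) (Icc 0 T) t - deriv (r t) x * deriv (W t) x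
      = r t x * (1 - r t x) * G (p t x))
    (hsupp : ∀ x, R ≤ |x| → r t x * (1 - r t x) = 0)
    (hint : Integrable fun x => deriv (fun s => r s x * (1 - r s x)) t) :
    ∫ x, deriv (fun s => r s x * (1 - r s x)) t ≤
      (pM / ν + C) * ∫ x, r t x * (1 - r t x) := by
  have hu : ContDiff ℝ 1 fun x => r t x * (1 - r t x) :=
    (hr.contDiff_of_uncurry (Ioo_subset_Icc_self ht)).mul
      (contDiff_const.sub (hr.contDiff_of_uncurry (Ioo_subset_Icc_self ht)))
  have hflux : ContDiff ℝ 1 fun x => r t x * (1 - r t x) * deriv (W t) x :=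
    hu.mul (hW2 t (Ioo_subset_Icc_self ht)).deriv'
  have hflux_supp : HasCompactSupport fun x => r t x * (1 - r t x) * deriv (W t) x :=
    hasCompactSupport_of_eq_zero_of_le_abs (R := R) fun x hx => by simp [hsupp x hx]
  have hflux_int : Integrable (deriv fun x => r t x * (1 - r t x) * deriv (W t) x) :=
    (hflux.continuous_deriv le_rfl).integrable_of_hasCompactSupport hflux_supp.deriv
  have hu_int : Integrable fun x => r t x * (1 - r t x) :=
    hu.continuous.integrable_of_hasCompactSupport (hasCompactSupport_of_eq_zero_of_le_abs hsupp)
  calc ∫ x, deriv (fun s => r s x * (1 - r s x)) t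
      ≤ ∫ x, (deriv (fun y => r t y * (1 - r t y) * deriv (W t) y) x
          + (pM / ν + C) * (r t x * (1 - r t x))) :=
        integral_mono hint (hflux_int.add (hu_int.const_mul _)) fun x =>
          deriv_mul_one_sub_le_of_transport hν hr hW2 ht x (hr01 x) (hp x) (hW0 x)
            (hbrinkman x) (hG x) (hpde x)
    _ = (pM / ν + C) * ∫ x, r t x * (1 - r t x) := by
        rw [integral_add hflux_int (hu_int.const_mul _), hflux_supp.integral_deriv_eq_zero hflux,
          zero_add, integral_const_mul]

theorem segregation_propagates_general (T ν pM R : ℝ) (hν : 0 < ν)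
    (G₁ G₂ : ℝ → ℝ) (hG₁ : Continuous G₁) (hG₂ : Continuous G₂)
    (r p W : ℝ → ℝ → ℝ)
    (hr : ContDiffOn ℝ 1 (Function.uncurry r) (Icc 0 T ×ˢ (univ : Set ℝ)))
    (hr01 : ∀ t ∈ Icc (0 : ℝ) T, ∀ x : ℝ, r t x ∈ Icc (0 : ℝ) 1)
    (hW2 : ∀ t ∈ Icc (0 : ℝ) T, ContDiff ℝ 2 (W t))
    (hp : ∀ t ∈ Icc (0 : ℝ) T, ∀ x : ℝ, p t x ∈ Icc (0 : ℝ) pM)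
    (hW0 : ∀ t ∈ Icc (0 : ℝ) T, ∀ x : ℝ, 0 ≤ W t x)
    (hbrinkman : ∀ t ∈ Icc (0 : ℝ) T, ∀ x : ℝ,
      -ν * deriv (deriv (W t)) x + W t x = p t x)
    (hsupp : ∀ t ∈ Icc (0 : ℝ) T, ∀ x : ℝ, R ≤ |x| → r t x * (1 - r t x) = 0)
    (hpde : ∀ t ∈ Icc (0 : ℝ) T, ∀ x : ℝ,
      derivWithin (fun s : ℝ => r s x) (Icc 0 T) t - deriv (r t) x * deriv (W t) x
        = r t x * (1 - r t x) * (G₁ (p t x) - G₂ (p t x)))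
    (hinit : ∫ x : ℝ, r 0 x * (1 - r 0 x) = 0) :
    ∀ t ∈ Icc (0 : ℝ) T, ∫ x : ℝ, r t x * (1 - r t x) = 0 := by
  have hu : ContDiffOn ℝ 1 (uncurry fun t x => r t x * (1 - r t x)) (Icc 0 T ×ˢ univ) :=
    hr.mul (contDiffOn_const.sub hr)
  obtain ⟨C, hC⟩ := isCompact_Icc.exists_bound_of_continuousOn
    ((hG₁.sub hG₂).continuousOn (s := Icc 0 pM))
  have hF_cont : ContinuousOn (fun t => ∫ x, r t x * (1 - r t x)) (Icc 0 T) :=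
    continuousOn_integral_of_compact_support (isCompact_Icc (a := -R) (b := R)) hu.continuousOn
      fun t x ht hx => hsupp t ht x (le_abs_of_notMem_Icc_neg hx)
  have hF_deriv (t : ℝ) (ht : t ∈ Ioo 0 T) := hasDerivAt_integral_of_contDiffOn isOpen_Ioo
    (hu.mono (prod_mono Ioo_subset_Icc_self subset_rfl))
    (fun s hs => hsupp s (Ioo_subset_Icc_self hs)) ht
  have hF_le (t : ℝ) (ht : t ∈ Ioo 0 T) :=
    have ht' := Ioo_subset_Icc_self ht
    integral_deriv_mul_one_sub_le_of_transport (G := fun q => G₁ q - G₂ q) hν hr hW2 ht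
      (hr01 t ht') (fun x => (hp t ht' x).2) (hW0 t ht') (hbrinkman t ht')
      (fun x => by simpa using hC _ (hp t ht' x)) (hpde t ht') (hsupp t ht') (hF_deriv t ht).1
  intro t ht
  have h := le_exp_mul_sub_mul_of_hasDerivAt_le hF_cont (fun t ht => (hF_deriv t ht).2) hF_le t ht
  rw [hinit, mul_zero] at h
  exact le_antisymm h
    (integral_nonneg fun x => mul_nonneg (hr01 t ht x).1 (sub_nonneg.2 (hr01 t ht x).2))

/-- propagation of segregation. If the population fraction `r` solves the
transport equation `∂_t r − (∂_x r)(∂_x W) = r(1−r)(G¹(p) − G²(p))` on `[0,T] × ℝ`,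
where `W ≥ 0` solves Brinkman's law `−ν ∂_x² W + W = p` with `0 ≤ p ≤ p_M`, `0 ≤ r ≤ 1`,
`r(1−r)` compactly supported in space, and the species are initially segregated
(`∫ r(0,·)(1−r(0,·)) dx = 0`), then they remain segregated for all `t ∈ [0,T]`. -/
theorem segregation_propagates (T ν pM R : ℝ) (hT : 0 < T) (hν : 0 < ν) (hpM : 0 < pM)
    (hR : 0 < R) (G₁ G₂ : ℝ → ℝ) (hG₁ : Continuous G₁) (hG₂ : Continuous G₂)
    (r p W : ℝ → ℝ → ℝ)
    (hr : ContDiffOn ℝ 1 (Function.uncurry r) (Icc 0 T ×ˢ (univ : Set ℝ)))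
    (hr01 : ∀ t ∈ Icc (0 : ℝ) T, ∀ x : ℝ, r t x ∈ Icc (0 : ℝ) 1)
    (hW2 : ∀ t ∈ Icc (0 : ℝ) T, ContDiff ℝ 2 (W t))
    (hWxcont : ContinuousOn (fun q : ℝ × ℝ => deriv (W q.1) q.2)
      (Icc 0 T ×ˢ (univ : Set ℝ)))
    (hp : ∀ t ∈ Icc (0 : ℝ) T, ∀ x : ℝ, p t x ∈ Icc (0 : ℝ) pM)
    (hW0 : ∀ t ∈ Icc (0 : ℝ) T, ∀ x : ℝ, 0 ≤ W t x)
    (hbrinkman : ∀ t ∈ Icc (0 : ℝ) T, ∀ x : ℝ,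
      -ν * deriv (deriv (W t)) x + W t x = p t x)
    (hsupp : ∀ t ∈ Icc (0 : ℝ) T, ∀ x : ℝ, R ≤ |x| → r t x * (1 - r t x) = 0)
    (hpde : ∀ t ∈ Icc (0 : ℝ) T, ∀ x : ℝ,
      derivWithin (fun s : ℝ => r s x) (Icc 0 T) t - deriv (r t) x * deriv (W t) x
        = r t x * (1 - r t x) * (G₁ (p t x) - G₂ (p t x)))
    (hinit : ∫ x : ℝ, r 0 x * (1 - r 0 x) = 0) :
    ∀ t ∈ Icc (0 : ℝ) T, ∫ x : ℝ, r t x * (1 - r t x) = 0 :=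
  segregation_propagates_general T ν pM R hν G₁ G₂ hG₁ hG₂ r p W hr hr01 hW2 hp hW0 hbrinkman hsupp
    hpde hinit
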